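/- Let F_e : ℝ → ℝ, σ > 0 and λ ≥ √(2/π)·σ. If the zero-mean Gaussian distribution N(0, σ) is a single-CDF overbound of F_e, i.e. F_G(x; 0, σ) ≥ F_e(x) for all x ≤ 0 and F_G(x; 0, σ) ≤ F_e(x) for all x > 0, then the zero-mean Cauchy distribution C(0, λ) is also a single-CDF overbound of F_e: F_C(x; 0, λ) ≥ F_e(x) for all x ≤ 0 and F_C(x; 0, λ) ≤ F_e(x) for all x > 0. -/

import Mathlib

/-- Gaussian PDF with location `μ` and scale `σ`. -/
noncomputable def gaussPDF (μ σ x : ℝ) : ℝ :=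
  (1 / (σ * Real.sqrt (2 * Real.pi))) * Real.exp (-(x - μ) ^ 2 / (2 * σ ^ 2))

/-- Gaussian CDF with location `μ` and scale `σ`. -/
noncomputable def gaussCDF (μ σ x : ℝ) : ℝ :=
  ∫ t in Set.Iic x, gaussPDF μ σ t

/-- Cauchy CDF with location `m` and scale `lam`. -/
noncomputable def cauchyCDF (m lam x : ℝ) : ℝ :=
  1 / 2 + (1 / Real.pi) * Real.arctan ((x - m) / lam)

/-!
Both CDFs are symmetric about `0` (`F(-x) = 1 - F(x)`), so it suffices to show that the Gaussian
CDF lies below the Cauchy CDF on `(-∞, 0]`. The Cauchy density is at most the Gaussian density at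
`t` exactly when `0 ≤ ψ (t ^ 2)`, where `ψ s = π (λ² + s) - λ σ √(2π) exp (s / (2σ²))` is concave,
and the hypothesis on `λ` says `0 ≤ ψ 0`. Hence for `x ≤ 0` either the Gaussian density dominates
on `[x, 0]` or it is dominated on `(-∞, x]`. Since both CDFs equal `1/2` at `0`, comparing the
masses of `[x, 0]` in the first case and of `(-∞, x]` in the second gives the claim.
-/

open MeasureTheory Set Real Filter Topology ProbabilityTheory
open scoped NNReal

theorem integral_Iic_neg_add_integral_Iic {f : ℝ → ℝ} (hf : Integrable f) (heven : ∀ t, f (-t) = f t)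
    (x : ℝ) : (∫ t in Iic (-x), f t) + ∫ t in Iic x, f t = ∫ t, f t := by
  rw [← integral_comp_neg_Ioi, add_comm]
  simp only [heven]
  exact intervalIntegral.integral_Iic_add_Ioi hf.integrableOn hf.integrableOn

theorem setIntegral_Iic_le_of_crossing {f g : ℝ → ℝ} {a x : ℝ} (hf : Integrable f)
    (hg : Integrable g) (hxa : x ≤ a) (h_eq : ∫ t in Iic a, f t = ∫ t in Iic a, g t)
    (hcross : (∀ t ∈ Icc x a, g t ≤ f t) ∨ ∀ t ∈ Iic x, f t ≤ g t) :
    ∫ t in Iic x, f t ≤ ∫ t in Iic x, g t := by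
  rcases hcross with h | h
  · have hfg : ∫ t in x..a, g t ≤ ∫ t in x..a, f t :=
      intervalIntegral.integral_mono_on hxa hg.intervalIntegrable hf.intervalIntegrable h
    have hf_split : (∫ t in Iic a, f t) - ∫ t in Iic x, f t = ∫ t in x..a, f t :=
      intervalIntegral.integral_Iic_sub_Iic hf.integrableOn hf.integrableOn
    have hg_split : (∫ t in Iic a, g t) - ∫ t in Iic x, g t = ∫ t in x..a, g t :=
      intervalIntegral.integral_Iic_sub_Iic hg.integrableOn hg.integrableOn
    linarith
  · exact setIntegral_mono_on hf.integrableOn hg.integrableOn measurableSet_Iic h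

theorem ConcaveOn.nonneg_on_Icc_or_neg_on_Ici {f : ℝ → ℝ} {a b : ℝ} (hf : ConcaveOn ℝ (Ici a) f)
    (ha : 0 ≤ f a) (hab : a ≤ b) : (∀ s ∈ Icc a b, 0 ≤ f s) ∨ ∀ s ∈ Ici b, f s < 0 := by
  by_cases hb : 0 ≤ f b
  · exact .inl fun s hs => (le_min ha hb).trans (hf.min_le_of_mem_Icc self_mem_Ici hab hs)
  · refine .inr fun s hs => not_le.1 fun hs' => hb ?_
    exact (le_min ha hs').trans (hf.min_le_of_mem_Icc self_mem_Ici (hab.trans hs) ⟨hab, hs⟩)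

theorem gaussPDF_eq_gaussianPDFReal (μ : ℝ) {σ : ℝ} (hσ : 0 ≤ σ) :
    gaussPDF μ σ = gaussianPDFReal μ (σ ^ 2).toNNReal := by
  ext x
  rw [gaussPDF, gaussianPDFReal, Real.coe_toNNReal _ (sq_nonneg σ),
    sqrt_mul (by positivity) (σ ^ 2), sqrt_sq hσ, one_div, mul_comm σ]

theorem gaussCDF_neg_add {σ : ℝ} (hσ : 0 < σ) (x : ℝ) : gaussCDF 0 σ (-x) + gaussCDF 0 σ x = 1 := by
  simp only [gaussCDF, gaussPDF_eq_gaussianPDFReal 0 hσ.le]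
  rw [integral_Iic_neg_add_integral_Iic (integrable_gaussianPDFReal 0 _)
    (fun t => by simp [gaussianPDFReal]), integral_gaussianPDFReal_eq_one]
  positivity

theorem cauchyCDF_eq_integral_cauchyPDFReal (m : ℝ) {lam : ℝ} (hlam : 0 < lam) (x : ℝ) :
    cauchyCDF m lam x = ∫ t in Iic x, cauchyPDFReal m lam.toNNReal t := by
  have hderiv (t : ℝ) : HasDerivAt (cauchyCDF m lam) (cauchyPDFReal m lam.toNNReal t) t := by
    refine ((((hasDerivAt_id t).sub_const m).div_const lam).arctan.const_mul (1 / π)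
      |>.const_add (1 / 2)).congr_deriv ?_
    rw [cauchyPDFReal_def', NNReal.coe_inv, Real.coe_toNNReal _ hlam.le, id]
    field_simp
  have hlim : Tendsto (cauchyCDF m lam) atBot (𝓝 0) := by
    have h := (tendsto_arctan_atBot.mono_right nhdsWithin_le_nhds).comp
      ((tendsto_atBot_add_const_right _ (-m) tendsto_id).atBot_div_const hlam)
    convert (h.const_mul (1 / π)).const_add (1 / 2) using 2
    · simp [cauchyCDF, sub_eq_add_neg]
    · field_simp; ring
  rw [integral_Iic_of_hasDerivAt_of_tendsto (hderiv x).continuousAt.continuousWithinAt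
    (fun t _ => hderiv t) (integrable_cauchyPDFReal m).integrableOn hlim, sub_zero]

theorem cauchyCDF_neg_add (lam x : ℝ) : cauchyCDF 0 lam (-x) + cauchyCDF 0 lam x = 1 := by
  simp only [cauchyCDF, sub_zero, neg_div, arctan_neg]
  ring

noncomputable def gaussCauchyGap (v γ : ℝ≥0) (s : ℝ) : ℝ :=
  π * (γ ^ 2 + s) - γ * √(2 * π * v) * exp (s / (2 * v))

theorem concaveOn_gaussCauchyGap (v γ : ℝ≥0) : ConcaveOn ℝ univ (gaussCauchyGap v γ) := by
  refine ⟨convex_univ, fun x _ y _ a b ha hb hab => ?_⟩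
  have hexp := convexOn_exp.2 (mem_univ (x / (2 * v))) (mem_univ (y / (2 * v))) ha hb hab
  have hK : 0 ≤ (γ : ℝ) * √(2 * π * v) := by positivity
  simp only [smul_eq_mul, gaussCauchyGap] at hexp ⊢
  rw [show a * (x / (2 * v)) + b * (y / (2 * v)) = (a * x + b * y) / (2 * v) by ring] at hexp
  linear_combination (π * (γ : ℝ) ^ 2) * hab + mul_le_mul_of_nonneg_left hexp hK

theorem cauchyPDFReal_le_gaussianPDFReal_iff {v γ : ℝ≥0} (hv : v ≠ 0) (hγ : γ ≠ 0) (t : ℝ) :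
    cauchyPDFReal 0 γ t ≤ gaussianPDFReal 0 v t ↔ 0 ≤ gaussCauchyGap v γ (t ^ 2) := by
  have hv' : (0 : ℝ) < v := by positivity
  have hγ' : (0 : ℝ) < γ := by positivity
  rw [cauchyPDFReal_def, gaussianPDFReal, sub_zero, neg_div, exp_neg, gaussCauchyGap,
    sub_nonneg, show π⁻¹ * γ * (t ^ 2 + γ ^ 2)⁻¹ = γ / (π * (γ ^ 2 + t ^ 2)) by field_simp; ring,
    ← mul_inv, ← one_div, div_le_div_iff₀ (by positivity) (by positivity), one_mul, ← mul_assoc]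

theorem cauchyPDFReal_le_gaussianPDFReal_on_Icc_or_ge_on_Iic {v γ : ℝ≥0} (hv : v ≠ 0)
    (hγ : γ ≠ 0) (hvγ : √(2 * π * v) ≤ π * γ) {x : ℝ} (hx : x ≤ 0) :
    (∀ t ∈ Icc x 0, cauchyPDFReal 0 γ t ≤ gaussianPDFReal 0 v t) ∨
      ∀ t ∈ Iic x, gaussianPDFReal 0 v t ≤ cauchyPDFReal 0 γ t := by
  have h0 : 0 ≤ gaussCauchyGap v γ 0 := by
    simp only [gaussCauchyGap, add_zero, zero_div, exp_zero, mul_one]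
    nlinarith [mul_le_mul_of_nonneg_left hvγ γ.coe_nonneg]
  rcases ((concaveOn_gaussCauchyGap v γ).subset (subset_univ _) (convex_Ici 0)
    ).nonneg_on_Icc_or_neg_on_Ici h0 (sq_nonneg x) with h | h
  · refine .inl fun t ht => (cauchyPDFReal_le_gaussianPDFReal_iff hv hγ t).2 (h _ ?_)
    exact ⟨sq_nonneg t, by nlinarith [ht.1, ht.2]⟩
  · refine .inr fun t ht => (not_le.1 fun hle => ?_).le
    exact (h (t ^ 2) (mem_Ici.2 (by nlinarith [mem_Iic.1 ht])) |>.not_ge)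
      ((cauchyPDFReal_le_gaussianPDFReal_iff hv hγ t).1 hle)

theorem sqrt_two_mul_pi_mul_sq_le {σ lam : ℝ} (hσ : 0 ≤ σ) (hlam : √(2 / π) * σ ≤ lam) :
    √(2 * π * σ ^ 2) ≤ π * lam := by
  have hsq : √(2 / π) ^ 2 = 2 / π := sq_sqrt (by positivity)
  rw [sqrt_le_left (mul_nonneg pi_pos.le ((by positivity : 0 ≤ √(2 / π) * σ).trans hlam))]
  calc 2 * π * σ ^ 2 = (π * (√(2 / π) * σ)) ^ 2 := by rw [mul_pow, mul_pow, hsq]; field_simp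
    _ ≤ (π * lam) ^ 2 := by gcongr

theorem gaussCDF_le_cauchyCDF {σ lam : ℝ} (hσ : 0 < σ) (hlam : √(2 / π) * σ ≤ lam) {x : ℝ}
    (hx : x ≤ 0) : gaussCDF 0 σ x ≤ cauchyCDF 0 lam x := by
  have hl : 0 < lam := (mul_pos (sqrt_pos.2 (by positivity)) hσ).trans_le hlam
  have hvγ : √(2 * π * (σ ^ 2).toNNReal) ≤ π * lam.toNNReal := by
    rw [Real.coe_toNNReal _ (sq_nonneg σ), Real.coe_toNNReal _ hl.le]
    exact sqrt_two_mul_pi_mul_sq_le hσ.le hlam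
  have hhalf : gaussCDF 0 σ 0 = cauchyCDF 0 lam 0 := by
    have hG := gaussCDF_neg_add hσ 0
    have hC := cauchyCDF_neg_add lam 0
    rw [neg_zero] at hG hC
    linarith
  rw [gaussCDF, gaussPDF_eq_gaussianPDFReal 0 hσ.le, cauchyCDF_eq_integral_cauchyPDFReal 0 hl]
    at hhalf ⊢
  exact setIntegral_Iic_le_of_crossing (integrable_gaussianPDFReal 0 _)
    (integrable_cauchyPDFReal 0) hx hhalf
    (cauchyPDFReal_le_gaussianPDFReal_on_Icc_or_ge_on_Iic (by positivity) (by positivity) hvγ hx)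

/-- If the zero-mean Gaussian `N(0, σ)` is a single-CDF overbound of `F_e` and
`λ ≥ √(2/π)·σ`, then the zero-mean Cauchy `C(0, λ)` is also a single-CDF
overbound of `F_e`. -/
theorem cauchy_overbound_of_gauss_overbound (F_e : ℝ → ℝ) (σ lam : ℝ)
    (hσ : 0 < σ) (hlam : lam ≥ Real.sqrt (2 / Real.pi) * σ)
    (hG_left : ∀ x ≤ (0 : ℝ), F_e x ≤ gaussCDF 0 σ x)
    (hG_right : ∀ x > (0 : ℝ), gaussCDF 0 σ x ≤ F_e x) :
    (∀ x ≤ (0 : ℝ), F_e x ≤ cauchyCDF 0 lam x) ∧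
    (∀ x > (0 : ℝ), cauchyCDF 0 lam x ≤ F_e x) := by
  refine ⟨fun x hx => (hG_left x hx).trans (gaussCDF_le_cauchyCDF hσ hlam hx), fun x hx => ?_⟩
  have hneg := gaussCDF_le_cauchyCDF hσ hlam (neg_nonpos.2 hx.le)
  linarith [hG_right x hx, gaussCDF_neg_add hσ x, cauchyCDF_neg_add lam x]
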